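/- arXiv:2310.20598 — 5 statements merged into one kernel-verified Lean document; each statement's English description precedes it below -/
import Mathlib

section
/- Let L, β ∈ ℝ and ω ≠ 0, and define Φ : ℝ → ℝ by Φ(w) = L + β + (ω·L − L − 2β)·exp(ω·w). Then for every w ∈ [0,1], ∫₀^w Φ(u) du − β·w + (1 − w)·L = (1/ω)·(Φ(w) + β). -/
open Real intervalIntegral

lemma exp_mul_integral (ω : ℝ) (hω : ω ≠ 0) (w : ℝ) :
    ∫ u in (0:ℝ)..w, Real.exp (ω * u) = (Real.exp (ω * w) - 1) / ω := by
  have := intervalIntegral.integral_comp_mul_left (a := (0:ℝ)) (b := w)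
    (fun x => Real.exp x) hω
  simp only [mul_zero, integral_exp, Real.exp_zero, smul_eq_mul] at this
  rw [this]; field_simp

theorem ocs_max_threshold_integral_identity
    (L β ω : ℝ) (hω : ω ≠ 0)
    (Φ : ℝ → ℝ)
    (hΦ : ∀ w, Φ w = L + β + (ω * L - L - 2 * β) * Real.exp (ω * w)) :
    ∀ w ∈ Set.Icc (0 : ℝ) 1,
      (∫ u in (0 : ℝ)..w, Φ u) - β * w + (1 - w) * L = (1 / ω) * (Φ w + β) := by
  intro w _
  have h1 : (∫ u in (0:ℝ)..w, Φ u)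
      = (L + β) * (w - 0) + (ω * L - L - 2 * β) * ((Real.exp (ω * w) - 1) / ω) := by
    simp only [hΦ]
    have hi : IntervalIntegrable (fun u => (ω * L - L - 2 * β) * Real.exp (ω * u))
        MeasureTheory.volume 0 w :=
      (Continuous.intervalIntegrable (by continuity) 0 w)
    rw [intervalIntegral.integral_add (intervalIntegrable_const) hi,
      intervalIntegral.integral_const, intervalIntegral.integral_const_mul,
      exp_mul_integral ω hω, smul_eq_mul]
    ring
  rw [h1, hΦ]
  field_simp
  ring
end

section
/- Let φ : ℝ → ℝ be antitone on [0,1], let β ≥ 0, w ∈ [0,1), D ∈ (0, 1 − w], x₀ ∈ [0, D], and w* ∈ (w, w + D]. Let c ∈ ℝ satisfy c + β < φ(w*). Define F(x) = c·x + β·(x − x₀) − ∫_w^{w+x} φ(u) du. Then every minimizer x* of F over the interval [x₀, D] satisfies w + x* ≥ w*. -/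
open Real intervalIntegral

theorem roro_min_rampon_minimizer_pushes_utilization
    (φ : ℝ → ℝ) (hφ : AntitoneOn φ (Set.Icc (0 : ℝ) 1))
    (β w D x₀ wstar c : ℝ)
    (hβ : 0 ≤ β)
    (hw : w ∈ Set.Ico (0 : ℝ) 1)
    (hD : D ∈ Set.Ioc (0 : ℝ) (1 - w))
    (hx₀ : x₀ ∈ Set.Icc (0 : ℝ) D)
    (hwstar : wstar ∈ Set.Ioc w (w + D))
    (hc : c + β < φ wstar)
    (F : ℝ → ℝ)
    (hF : ∀ x, F x = c * x + β * (x - x₀) - ∫ u in w..(w + x), φ u) :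
    ∀ xstar ∈ Set.Icc x₀ D, (∀ y ∈ Set.Icc x₀ D, F xstar ≤ F y) →
      wstar ≤ w + xstar := by
  intro xstar hxstar hmin
  by_contra hlt
  push_neg at hlt
  obtain ⟨hw0, hw1⟩ := hw
  obtain ⟨hD0, hD1⟩ := hD
  obtain ⟨hws1, hws2⟩ := hwstar
  set y := wstar - w with hy
  have hxy : xstar < y := by simp only [hy]; linarith
  have hx0y : x₀ ≤ y := le_trans hxstar.1 hxy.le
  have hyD : y ≤ D := by simp only [hy]; linarith
  have hwy : w + y = wstar := by simp only [hy]; ring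
  -- intervals are inside [0,1]
  have hx0 : 0 ≤ xstar := le_trans hx₀.1 hxstar.1
  have hsub1 : Set.uIcc w (w + xstar) ⊆ Set.Icc 0 1 := by
    rw [Set.uIcc_of_le (by linarith)]
    exact Set.Icc_subset_Icc (by linarith) (by linarith [hxstar.2])
  have hsub2 : Set.uIcc (w + xstar) (w + y) ⊆ Set.Icc 0 1 := by
    rw [Set.uIcc_of_le (by linarith)]
    exact Set.Icc_subset_Icc (by linarith) (by rw [hwy]; linarith)
  have hint1 : IntervalIntegrable φ MeasureTheory.volume w (w + xstar) :=
    (hφ.mono hsub1).intervalIntegrable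
  have hint2 : IntervalIntegrable φ MeasureTheory.volume (w + xstar) (w + y) :=
    (hφ.mono hsub2).intervalIntegrable
  have hsplit : (∫ u in w..(w + y), φ u) =
      (∫ u in w..(w + xstar), φ u) + ∫ u in (w + xstar)..(w + y), φ u :=
    (integral_add_adjacent_intervals hint1 hint2).symm
  -- lower bound the middle integral
  have hptwise : ∀ u ∈ Set.Icc (w + xstar) (w + y), φ wstar ≤ φ u := by
    intro u hu
    apply hφ
    · exact hsub2 (by rw [Set.uIcc_of_le (by linarith)]; exact hu)
    · exact ⟨by linarith, by linarith⟩
    · rw [← hwy]; exact hu.2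
  have hintge : φ wstar * (y - xstar) ≤ ∫ u in (w + xstar)..(w + y), φ u := by
    have := intervalIntegral.integral_mono_on (by linarith : w + xstar ≤ w + y)
      (_root_.intervalIntegrable_const (c := φ wstar)) hint2 hptwise
    rw [intervalIntegral.integral_const] at this
    calc φ wstar * (y - xstar) = (w + y - (w + xstar)) • φ wstar := by
          simp [smul_eq_mul]; ring
      _ ≤ _ := this
  have hFy : F xstar ≤ F y := hmin y ⟨hx0y, hyD⟩
  rw [hF xstar, hF y, hsplit] at hFy
  nlinarith [hFy, hintge, hc, hxy]
end

section
/- Let Φ : ℝ → ℝ be monotone (increasing) on [0,1], let β ≥ 0, w ∈ [0,1), D ∈ (0, 1 − w], x₀ ∈ [0, D], and w* ∈ (w, w + D]. Let c ∈ ℝ satisfy c − β > Φ(w*). Define G(x) = c·x − β·(x − x₀) − ∫_w^{w+x} Φ(u) du. Then every maximizer x* of G over the interval [x₀, D] satisfies w + x* ≥ w*. -/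
open Real intervalIntegral

theorem roro_max_rampon_maximizer_pushes_utilization
    (Φ : ℝ → ℝ) (hΦ : MonotoneOn Φ (Set.Icc (0 : ℝ) 1))
    (β w D x₀ wstar c : ℝ)
    (hβ : 0 ≤ β)
    (hw : w ∈ Set.Ico (0 : ℝ) 1)
    (hD : D ∈ Set.Ioc (0 : ℝ) (1 - w))
    (hx₀ : x₀ ∈ Set.Icc (0 : ℝ) D)
    (hwstar : wstar ∈ Set.Ioc w (w + D))
    (hc : c - β > Φ wstar)
    (G : ℝ → ℝ)
    (hG : ∀ x, G x = c * x - β * (x - x₀) - ∫ u in w..(w + x), Φ u) :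
    ∀ xstar ∈ Set.Icc x₀ D, (∀ y ∈ Set.Icc x₀ D, G y ≤ G xstar) →
      wstar ≤ w + xstar := by
  intro xstar hxs hmax
  by_contra hlt
  push_neg at hlt
  obtain ⟨hw0, hw1⟩ := hw
  obtain ⟨hD0, hD1⟩ := hD
  obtain ⟨hws1, hws2⟩ := hwstar
  set y := wstar - w with hy
  have hxy : xstar < y := by linarith
  have hyIcc : y ∈ Set.Icc x₀ D := ⟨le_of_lt (lt_of_le_of_lt hxs.1 hxy), by linarith⟩
  have hxs0 : 0 ≤ xstar := le_trans hx₀.1 hxs.1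
  have hws01 : wstar ∈ Set.Icc (0:ℝ) 1 := ⟨by linarith, by linarith⟩
  -- integrability helper
  have hint : ∀ a b : ℝ, a ∈ Set.Icc (0:ℝ) 1 → b ∈ Set.Icc (0:ℝ) 1 →
      IntervalIntegrable Φ MeasureTheory.volume a b := by
    intro a b ha hb
    exact (hΦ.mono (Set.uIcc_subset_Icc ha hb)).intervalIntegrable
  have hwIcc : w ∈ Set.Icc (0:ℝ) 1 := ⟨hw0, le_of_lt hw1⟩
  have hwxIcc : w + xstar ∈ Set.Icc (0:ℝ) 1 := ⟨by linarith, by linarith [hxs.2]⟩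
  have hadd : (∫ u in w..(w + xstar), Φ u) + (∫ u in (w + xstar)..wstar, Φ u)
      = ∫ u in w..wstar, Φ u :=
    intervalIntegral.integral_add_adjacent_intervals
      (hint w (w + xstar) hwIcc hwxIcc) (hint (w + xstar) wstar hwxIcc hws01)
  have hbound : (∫ u in (w + xstar)..wstar, Φ u) ≤ Φ wstar * (wstar - (w + xstar)) := by
    have h1 : (∫ u in (w + xstar)..wstar, Φ u) ≤ ∫ _ in (w + xstar)..wstar, Φ wstar := by
      apply intervalIntegral.integral_mono_on (by linarith)
        (hint (w + xstar) wstar hwxIcc hws01) intervalIntegrable_const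
      intro u hu
      exact hΦ ⟨by linarith [hu.1], by linarith [hu.2]⟩ hws01 hu.2
    simpa [mul_comm] using h1
  have hGy : G y ≤ G xstar := hmax y hyIcc
  rw [hG y, hG xstar] at hGy
  have hwy : w + y = wstar := by ring
  rw [hwy] at hGy
  have key : Φ wstar * (wstar - (w + xstar)) < (c - β) * (wstar - (w + xstar)) :=
    mul_lt_mul_of_pos_right hc (by linarith)
  simp only [hy] at hGy
  nlinarith [hGy, hbound, hadd, key]
end

section
/- Let 0 < L ≤ U, β ≥ 0, α > 1, ε ∈ [0, α − 1], and set λ = (α − 1 − ε)/(α − 1). Let ALG, ADV, RORO, OPT be real numbers satisfying ALG ≤ λ·ADV + (1 − λ)·RORO, RORO ≤ α·OPT, L ≤ OPT ≤ ADV, and ADV ≤ U + 2β. Then ALG ≤ (1 + ε)·ADV, and ALG ≤ ( ((U + 2β)/L)·(α − 1 − ε) + α·ε )/(α − 1) · OPT. -/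
theorem ro_advice_min_consistency_robustness
    (L U β α ε lam ALG ADV RORO OPT : ℝ)
    (hL : 0 < L) (hLU : L ≤ U) (hβ : 0 ≤ β)
    (hα : 1 < α) (hε : ε ∈ Set.Icc (0 : ℝ) (α - 1))
    (hlam : lam = (α - 1 - ε) / (α - 1))
    (hALG : ALG ≤ lam * ADV + (1 - lam) * RORO)
    (hRORO : RORO ≤ α * OPT)
    (hOPT : L ≤ OPT) (hADV1 : OPT ≤ ADV) (hADV2 : ADV ≤ U + 2 * β) :
    ALG ≤ (1 + ε) * ADV ∧
    ALG ≤ (((U + 2 * β) / L) * (α - 1 - ε) + α * ε) / (α - 1) * OPT := by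
  obtain ⟨hε0, hε1⟩ := hε
  have hα1 : (0:ℝ) < α - 1 := by linarith
  have hlam0 : 0 ≤ lam := by
    rw [hlam]; apply div_nonneg <;> linarith
  have hlam1 : lam ≤ 1 := by
    rw [hlam, div_le_one hα1]; linarith
  have h1 : (1 - lam) * RORO ≤ (1 - lam) * (α * OPT) := by
    apply mul_le_mul_of_nonneg_left hRORO; linarith
  have hOPTpos : 0 < OPT := lt_of_lt_of_le hL hOPT
  have hADVpos : 0 < ADV := lt_of_lt_of_le hOPTpos hADV1
  constructor
  · have h2 : ALG ≤ lam * ADV + (1 - lam) * (α * OPT) := by linarith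
    have h3 : (1 - lam) * (α * OPT) ≤ (1 - lam) * (α * ADV) := by
      apply mul_le_mul_of_nonneg_left _ (by linarith)
      nlinarith
    have hlameq : lam * (α - 1) = α - 1 - ε := by
      rw [hlam]; field_simp
    nlinarith
  · have hkey : ADV ≤ (U + 2 * β) / L * OPT := by
      rw [div_mul_eq_mul_div, le_div_iff₀ hL]
      nlinarith
    have h2 : lam * ADV ≤ lam * ((U + 2 * β) / L * OPT) :=
      mul_le_mul_of_nonneg_left hkey hlam0
    have h3 : ALG ≤ lam * ((U + 2 * β) / L * OPT) + (1 - lam) * (α * OPT) := by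
      linarith
    have heq : lam * ((U + 2 * β) / L * OPT) + (1 - lam) * (α * OPT)
        = (((U + 2 * β) / L) * (α - 1 - ε) + α * ε) / (α - 1) * OPT := by
      rw [hlam]; field_simp; ring
    linarith [heq ▸ h3]
end

section
/- Let 0 < L ≤ U, 0 ≤ 2β < L, ω > 1, ε ∈ [0, ω − 1], and set λ = (ω/(1 + ε) − 1)/(ω − 1). Let ALG, ADV, RORO, OPT be real numbers satisfying OPT > 0, ALG ≥ λ·ADV + (1 − λ)·RORO, RORO ≥ OPT/ω, ADV ≤ OPT, and ADV ≥ ((L − 2β)/U)·OPT. Then ADV ≤ (1 + ε)·ALG, and OPT ≤ ( (ω − 1)·(1 + ε) / ( ε + ((L − 2β)/U)·(ω − 1 − ε) ) ) · ALG. -/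
/-!
With `λ = (ω/(1+ε) - 1)/(ω - 1)`, the guarantee `ALG ≥ λ·ADV + (1-λ)·RORO` together with lower
bounds `ADV ≥ ρ·X` and `RORO ≥ X/ω` gives `ALG ≥ (λρ + (1-λ)/ω)·X`, and the choice of `λ` makes
`λρ + (1-λ)/ω = (ε + ρ(ω-1-ε)) / ((1+ε)(ω-1))`. Consistency is the case `X = ADV`, `ρ = 1`
(as `RORO ≥ OPT/ω ≥ ADV/ω`), where the factor is `1/(1+ε)`; robustness is the case `X = OPT`,
`ρ = (L-2β)/U`.
-/

noncomputable def adviceWeight (ω ε : ℝ) : ℝ := (ω / (1 + ε) - 1) / (ω - 1)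

section adviceWeight

variable {ω ε : ℝ}

theorem adviceWeight_nonneg (hε : 0 ≤ ε) (hεω : ε ≤ ω - 1) : 0 ≤ adviceWeight ω ε := by
  have h1ε : 0 < 1 + ε := by linarith
  refine div_nonneg ?_ (by linarith)
  rw [sub_nonneg, le_div_iff₀ h1ε]
  linarith

theorem adviceWeight_le_one (hε : 0 ≤ ε) (hω : 1 < ω) : adviceWeight ω ε ≤ 1 := by
  have hle : ω / (1 + ε) ≤ ω := div_le_self (by linarith) (by linarith)
  rw [adviceWeight, div_le_one (by linarith)]
  linarith

theorem adviceWeight_mul_add_one_sub_div (ρ : ℝ) (hε : 1 + ε ≠ 0) (hω : ω - 1 ≠ 0)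
    (hω0 : ω ≠ 0) :
    adviceWeight ω ε * ρ + (1 - adviceWeight ω ε) / ω
      = (ε + ρ * (ω - 1 - ε)) / ((1 + ε) * (ω - 1)) := by
  unfold adviceWeight
  field_simp
  ring

theorem adviceWeight_add_one_sub_div (hε : 1 + ε ≠ 0) (hω : ω - 1 ≠ 0) (hω0 : ω ≠ 0) :
    adviceWeight ω ε + (1 - adviceWeight ω ε) / ω = (1 + ε)⁻¹ := by
  simpa [mul_comm (1 + ε), ← div_div, div_self hω] using
    adviceWeight_mul_add_one_sub_div 1 hε hω hω0

end adviceWeight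

theorem mul_le_of_le_convex_comb {lam ρ ω X A R M : ℝ} (hlam0 : 0 ≤ lam) (hlam1 : lam ≤ 1)
    (hA : ρ * X ≤ A) (hR : X / ω ≤ R) (hM : lam * A + (1 - lam) * R ≤ M) :
    (lam * ρ + (1 - lam) / ω) * X ≤ M :=
  calc (lam * ρ + (1 - lam) / ω) * X = lam * (ρ * X) + (1 - lam) * (X / ω) := by ring
    _ ≤ lam * A + (1 - lam) * R := by gcongr
    _ ≤ M := hM

theorem ro_advice_max_consistency_robustness_general
    (L U β ω ε lam ALG ADV RORO OPT : ℝ)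
    (hL : 0 < L) (hLU : L ≤ U) (hβL : 2 * β < L)
    (hω : 1 < ω) (hε : ε ∈ Set.Icc (0 : ℝ) (ω - 1))
    (hlam : lam = (ω / (1 + ε) - 1) / (ω - 1))
    (hALG : ALG ≥ lam * ADV + (1 - lam) * RORO)
    (hRORO : RORO ≥ OPT / ω)
    (hADV1 : ADV ≤ OPT) (hADV2 : ADV ≥ ((L - 2 * β) / U) * OPT) :
    ADV ≤ (1 + ε) * ALG ∧
    OPT ≤ ((ω - 1) * (1 + ε) / (ε + ((L - 2 * β) / U) * (ω - 1 - ε))) * ALG := by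
  obtain ⟨hε0, hεω⟩ := hε
  obtain rfl : lam = adviceWeight ω ε := hlam
  have h1ε : 0 < 1 + ε := by linarith
  have hω1 : 0 < ω - 1 := by linarith
  have hω0 : 0 < ω := by linarith
  have hlam0 := adviceWeight_nonneg hε0 hεω
  have hlam1 := adviceWeight_le_one hε0 hω
  set ρ := (L - 2 * β) / U
  have hρ : 0 < ρ := div_pos (by linarith) (by linarith)
  constructor
  · have hRORO' : ADV / ω ≤ RORO := (div_le_div_of_nonneg_right hADV1 hω0.le).trans hRORO
    have h := mul_le_of_le_convex_comb hlam0 hlam1 (one_mul ADV).le hRORO' hALG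
    rw [mul_one, adviceWeight_add_one_sub_div h1ε.ne' hω1.ne' hω0.ne',
      inv_mul_le_iff₀ h1ε] at h
    exact h
  · have hD : 0 < ε + ρ * (ω - 1 - ε) := by
      rcases hε0.eq_or_lt with rfl | hε0
      · simpa using mul_pos hρ hω1
      · nlinarith
    have h := mul_le_of_le_convex_comb hlam0 hlam1 hADV2 hRORO hALG
    rw [adviceWeight_mul_add_one_sub_div ρ h1ε.ne' hω1.ne' hω0.ne', div_mul_eq_mul_div,
      div_le_iff₀ (by positivity)] at h
    rw [div_mul_eq_mul_div, le_div_iff₀ hD]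
    linarith

theorem ro_advice_max_consistency_robustness
    (L U β ω ε lam ALG ADV RORO OPT : ℝ)
    (hL : 0 < L) (hLU : L ≤ U) (hβ : 0 ≤ β) (hβL : 2 * β < L)
    (hω : 1 < ω) (hε : ε ∈ Set.Icc (0 : ℝ) (ω - 1))
    (hlam : lam = (ω / (1 + ε) - 1) / (ω - 1))
    (hOPTpos : 0 < OPT)
    (hALG : ALG ≥ lam * ADV + (1 - lam) * RORO)
    (hRORO : RORO ≥ OPT / ω)
    (hADV1 : ADV ≤ OPT) (hADV2 : ADV ≥ ((L - 2 * β) / U) * OPT) :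
    ADV ≤ (1 + ε) * ALG ∧
    OPT ≤ ((ω - 1) * (1 + ε) / (ε + ((L - 2 * β) / U) * (ω - 1 - ε))) * ALG :=
  ro_advice_max_consistency_robustness_general L U β ω ε lam ALG ADV RORO OPT hL hLU hβL hω hε hlam
    hALG hRORO hADV1 hADV2
end
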